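/- Let C be a category, D : C → Set a functor, and F a functor from C to unital associative ℂ-algebras. For each natural isomorphism η : F ≅ F, the assignment (η·Φ)_c := η_c ∘ Φ_c maps Fld(D,F) to itself (i.e., the componentwise composition with η is again a natural transformation from D to the underlying-set functor of F), the map Φ ↦ η·Φ is a unital ℂ-algebra automorphism of Fld(D,F), and η ↦ (Φ ↦ η·Φ) is a group homomorphism from the group Aut(F) of natural automorphisms of F to the group of ℂ-algebra automorphisms of Fld(D,F). -/

import Mathlib

open CategoryTheory

/-!
Naturality of `Φ : D ⟶ F` is the family of equations `Φ_{c'} ∘ D(ψ) = F(ψ) ∘ Φ_c`. As every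
`F(ψ)` is a unital algebra homomorphism, these equations are stable under the pointwise
operations, so `Fld(D,F)` is a subalgebra of `∏_c (D(c) → F(c))`. A gauge transformation `η` acts
by postcomposition, componentwise by algebra homomorphisms and with inverse postcomposition by
`η⁻¹`; associativity of composition makes `η ↦ (Φ ↦ Φ ≫ η)` a group homomorphism.
-/

/-- The global gauge group `Aut(F)` of a functor `F` from `C` to unital
associative `ℂ`-algebras (encoded as a `Type`-valued functor whose values carry
`Ring` and `Algebra ℂ` structures): natural automorphisms of `F` all of whose
components (and the components of their inverses) are unital `ℂ`-algebra
homomorphisms.  It is a subgroup of the automorphism group of the underlying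
`Type`-valued functor. -/
def gaugeGroup {C : Type*} [Category C] (F : C ⥤ Type u)
    [∀ c : C, Ring (F.obj c)] [∀ c : C, Algebra ℂ (F.obj c)] :
    Subgroup (Aut F) where
  carrier := {η | (∀ c : C, ∃ g : F.obj c →ₐ[ℂ] F.obj c, ⇑g = η.hom.app c) ∧
                  (∀ c : C, ∃ g : F.obj c →ₐ[ℂ] F.obj c, ⇑g = η.inv.app c)}
  one_mem' :=
    ⟨fun c => ⟨AlgHom.id ℂ (F.obj c), rfl⟩, fun c => ⟨AlgHom.id ℂ (F.obj c), rfl⟩⟩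
  mul_mem' := by
    rintro a b ⟨ha1, ha2⟩ ⟨hb1, hb2⟩
    constructor
    · intro c
      obtain ⟨ga, hga⟩ := ha1 c
      obtain ⟨gb, hgb⟩ := hb1 c
      refine ⟨ga.comp gb, ?_⟩
      funext x
      simp [hga, hgb, Aut.Aut_mul_def]
      rfl
    · intro c
      obtain ⟨ga, hga⟩ := ha2 c
      obtain ⟨gb, hgb⟩ := hb2 c
      refine ⟨gb.comp ga, ?_⟩
      funext x
      simp [hga, hgb, Aut.Aut_mul_def]
      rfl
  inv_mem' := by
    rintro a ⟨ha1, ha2⟩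
    exact ⟨fun c => ha2 c, fun c => ha1 c⟩

namespace CategoryTheory.Functor

variable {C : Type*} [Category C]

class MapIsRingHom (F : C ⥤ Type u) [∀ c : C, Ring (F.obj c)] : Prop where
  map_one : ∀ {c c' : C} (ψ : c ⟶ c'), F.map ψ (1 : F.obj c) = 1
  map_mul : ∀ {c c' : C} (ψ : c ⟶ c') (x y : F.obj c), F.map ψ (x * y) = F.map ψ x * F.map ψ y
  map_add : ∀ {c c' : C} (ψ : c ⟶ c') (x y : F.obj c), F.map ψ (x + y) = F.map ψ x + F.map ψ y

class MapIsAlgHom (R : Type*) [CommRing R] (F : C ⥤ Type u) [∀ c : C, Ring (F.obj c)]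
    [∀ c : C, Algebra R (F.obj c)] : Prop extends F.MapIsRingHom where
  map_smul : ∀ {c c' : C} (ψ : c ⟶ c') (a : R) (x : F.obj c), F.map ψ (a • x) = a • F.map ψ x

variable (F : C ⥤ Type u) [∀ c : C, Ring (F.obj c)] [F.MapIsRingHom]

def mapRingHom {c c' : C} (ψ : c ⟶ c') : F.obj c →+* F.obj c' :=
  RingHom.mk' ⟨⟨F.map ψ, MapIsRingHom.map_one ψ⟩, MapIsRingHom.map_mul ψ⟩ (MapIsRingHom.map_add ψ)

lemma mapRingHom_apply {c c' : C} (ψ : c ⟶ c') (x : F.obj c) : F.mapRingHom ψ x = F.map ψ x :=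
  rfl

end CategoryTheory.Functor

namespace LocallyCovariantField

open Functor

variable {C : Type*} [Category C]

section Ring

variable (D F : C ⥤ Type u) [∀ c : C, Ring (F.obj c)] [F.MapIsRingHom]

def naturalSubring : Subring (∀ c : C, D.obj c → F.obj c) where
  carrier := {s | ∀ {c c' : C} (ψ : c ⟶ c') (f : D.obj c), s c' (D.map ψ f) = F.map ψ (s c f)}
  one_mem' ψ _ := (map_one (F.mapRingHom ψ)).symm
  zero_mem' ψ _ := (map_zero (F.mapRingHom ψ)).symm
  mul_mem' hs ht _ _ ψ f := by simp [hs ψ f, ht ψ f, ← mapRingHom_apply]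
  add_mem' hs ht _ _ ψ f := by simp [hs ψ f, ht ψ f, ← mapRingHom_apply]
  neg_mem' hs _ _ ψ f := by simp [hs ψ f, ← mapRingHom_apply]

def natTransEquivNaturalSubring : (D ⟶ F) ≃ naturalSubring D F where
  toFun Φ := ⟨fun c => Φ.app c, fun ψ f => NatTrans.naturality_apply Φ ψ f⟩
  invFun s :=
    { app c := TypeCat.ofHom (s.val c)
      naturality _ _ ψ := ConcreteCategory.hom_ext _ _ fun f => s.prop ψ f }
  left_inv _ := rfl
  right_inv _ := rfl

instance : Ring (D ⟶ F) := (natTransEquivNaturalSubring D F).ring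

variable {D F}

@[simp]
lemma add_app (Φ Ψ : D ⟶ F) (c : C) (f : D.obj c) : (Φ + Ψ).app c f = Φ.app c f + Ψ.app c f :=
  rfl

@[simp]
lemma mul_app (Φ Ψ : D ⟶ F) (c : C) (f : D.obj c) : (Φ * Ψ).app c f = Φ.app c f * Ψ.app c f :=
  rfl

@[simp]
lemma zero_app (c : C) (f : D.obj c) : (0 : D ⟶ F).app c f = 0 := rfl

@[simp]
lemma one_app (c : C) (f : D.obj c) : (1 : D ⟶ F).app c f = 1 := rfl

end Ring

section Algebra

variable (R : Type*) [CommRing R] (D F : C ⥤ Type u) [∀ c : C, Ring (F.obj c)]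
  [∀ c : C, Algebra R (F.obj c)] [F.MapIsAlgHom R]

def naturalSubalgebra : Subalgebra R (∀ c : C, D.obj c → F.obj c) where
  __ := naturalSubring D F
  algebraMap_mem' a _ _ ψ _ := by
    simp [Algebra.algebraMap_eq_smul_one, MapIsAlgHom.map_smul, MapIsRingHom.map_one]

-- Transporting along the same equivalence as the `Ring` instance keeps the two ring structures
-- definitionally equal.
instance : Algebra R (D ⟶ F) :=
  Equiv.algebra (β := naturalSubalgebra R D F) R (natTransEquivNaturalSubring D F)

variable {R D F}

@[simp]
lemma smul_app (a : R) (Φ : D ⟶ F) (c : C) (f : D.obj c) : (a • Φ).app c f = a • Φ.app c f :=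
  rfl

@[simp]
lemma algebraMap_app (a : R) (c : C) (f : D.obj c) :
    (algebraMap R (D ⟶ F) a).app c f = algebraMap R (F.obj c) a :=
  rfl

def postcompAlgHom (τ : F ⟶ F) (hτ : ∀ c, ∃ g : F.obj c →ₐ[R] F.obj c, ⇑g = τ.app c) :
    (D ⟶ F) →ₐ[R] (D ⟶ F) where
  toFun Φ := Φ ≫ τ
  map_one' := by ext c f; obtain ⟨g, hg⟩ := hτ c; simp [← hg]
  map_mul' Φ Ψ := by ext c f; obtain ⟨g, hg⟩ := hτ c; simp [← hg]
  map_zero' := by ext c f; obtain ⟨g, hg⟩ := hτ c; simp [← hg]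
  map_add' Φ Ψ := by ext c f; obtain ⟨g, hg⟩ := hτ c; simp [← hg]
  commutes' a := by ext c f; obtain ⟨g, hg⟩ := hτ c; simp [← hg]

end Algebra

variable (D F : C ⥤ Type u) [∀ c : C, Ring (F.obj c)] [∀ c : C, Algebra ℂ (F.obj c)]
  [F.MapIsAlgHom ℂ]

def gaugeAction : gaugeGroup F →* ((D ⟶ F) ≃ₐ[ℂ] (D ⟶ F)) where
  toFun η := AlgEquiv.ofAlgHom (postcompAlgHom _ η.2.1) (postcompAlgHom _ η.2.2)
    (by ext Φ : 1; simp [postcompAlgHom, Iso.inv_hom_id η.1])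
    (by ext Φ : 1; simp [postcompAlgHom, Iso.hom_inv_id η.1])
  map_one' := by ext Φ : 1; exact Category.comp_id Φ
  map_mul' _ _ := by ext Φ : 1; exact (Category.assoc Φ _ _).symm

end LocallyCovariantField

/-- **The global gauge group acts on the algebra of locally covariant fields.**
For each natural automorphism `η` of the algebra-valued functor `F`, the
assignment `(η·Φ)_c := η_c ∘ Φ_c` maps `Fld(D,F) = (D ⟶ F)` to itself (the
componentwise composite is again a natural transformation, since `(ρ η) Φ` is an
element of `D ⟶ F`), the map `Φ ↦ η·Φ` is a unital `ℂ`-algebra automorphism of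
`Fld(D,F)` with its pointwise algebra structure, and `η ↦ (Φ ↦ η·Φ)` is a group
homomorphism from the gauge group to the group of `ℂ`-algebra automorphisms of
`Fld(D,F)`. -/
theorem gaugeGroup_acts_on_fields
    {C : Type*} [Category C] (D : C ⥤ Type u) (F : C ⥤ Type u)
    [∀ c : C, Ring (F.obj c)] [∀ c : C, Algebra ℂ (F.obj c)]
    (hmap_one : ∀ {c c' : C} (ψ : c ⟶ c'), F.map ψ (1 : F.obj c) = 1)
    (hmap_mul : ∀ {c c' : C} (ψ : c ⟶ c') (x y : F.obj c),
      F.map ψ (x * y) = F.map ψ x * F.map ψ y)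
    (hmap_add : ∀ {c c' : C} (ψ : c ⟶ c') (x y : F.obj c),
      F.map ψ (x + y) = F.map ψ x + F.map ψ y)
    (hmap_smul : ∀ {c c' : C} (ψ : c ⟶ c') (a : ℂ) (x : F.obj c),
      F.map ψ (a • x) = a • F.map ψ x) :
    ∃ ringInst : Ring (D ⟶ F),
      letI := ringInst
      ∃ algInst : Algebra ℂ (D ⟶ F),
        letI := algInst
        -- the algebra structure on Fld(D,F) is the pointwise one
        ((∀ (Φ Ψ : D ⟶ F) (c : C) (f : D.obj c),
            (Φ + Ψ).app c f = Φ.app c f + Ψ.app c f) ∧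
         (∀ (a : ℂ) (Φ : D ⟶ F) (c : C) (f : D.obj c),
            (a • Φ).app c f = a • Φ.app c f) ∧
         (∀ (Φ Ψ : D ⟶ F) (c : C) (f : D.obj c),
            (Φ * Ψ).app c f = Φ.app c f * Ψ.app c f) ∧
         (∀ (c : C) (f : D.obj c), (1 : D ⟶ F).app c f = 1)) ∧
        -- the gauge group acts by ℂ-algebra automorphisms, via a group
        -- homomorphism, and the action is the componentwise one
        ∃ ρ : gaugeGroup F →* ((D ⟶ F) ≃ₐ[ℂ] (D ⟶ F)),
          ∀ (η : gaugeGroup F) (Φ : D ⟶ F) (c : C) (f : D.obj c),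
            (ρ η Φ).app c f = (η : Aut F).hom.app c (Φ.app c f) := by
  have : F.MapIsAlgHom ℂ :=
    { map_one := hmap_one, map_mul := hmap_mul, map_add := hmap_add, map_smul := hmap_smul }
  open LocallyCovariantField in
  exact ⟨inferInstance, inferInstance, ⟨add_app, smul_app, mul_app, one_app⟩, gaugeAction D F,
    fun _ _ _ _ => rfl⟩
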